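/- arXiv:1901.05623 — 4 statements merged into one kernel-verified Lean document; each statement's English description precedes it below -/
import Mathlib

section
/- Subadditivity of mutual information under conditional independence: let X, Y, Z be random variables taking values in finite sets. If X and Y are conditionally independent given Z (i.e., P(X=x, Y=y | Z=z) = P(X=x|Z=z)·P(Y=y|Z=z) whenever P(Z=z) ≠ 0), then I((X,Y); Z) ≤ I(X;Z) + I(Y;Z). -/
open Finset

/-- Shannon entropy (base 2) of a probability mass function on a finite set,
with the convention `0·log 0 = 0` (note `Real.logb 2 0 = 0`). -/
noncomputable def shannonEntropy {α : Type*} [Fintype α] (p : α → ℝ) : ℝ :=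
  -∑ a, p a * Real.logb 2 (p a)

/-- Mutual information `I(X;Y) = H(X) + H(Y) − H(X,Y)` of a joint pmf on a product
of finite sets. -/
noncomputable def mutualInfoFin {α β : Type*} [Fintype α] [Fintype β]
    (p : α × β → ℝ) : ℝ :=
  shannonEntropy (fun a => ∑ b, p (a, b)) + shannonEntropy (fun b => ∑ a, p (a, b)) -
    shannonEntropy p

/-!
Conditional independence gives `p(x,y,z) = p(x,z) p(y,z) / p(z)` on the support of `p`, hence
the chain identity `H(X,Y,Z) = H(X,Z) + H(Y,Z) - H(Z)`. Substituting it, the two sides of the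
inequality differ by `H(X) + H(Y) - H(X,Y)`, which is nonnegative by subadditivity of entropy:
Gibbs' inequality comparing the joint law of `(X,Y)` with the product of its marginals.
-/

open Real

section Gibbs

variable {ι : Type*} [Fintype ι] {f g : ι → ℝ}

theorem sum_mul_log_le_sum_mul_log_self (hf : ∀ i, 0 ≤ f i) (hg : ∀ i, 0 ≤ g i)
    (hfg : ∀ i, f i ≠ 0 → g i ≠ 0) (hsum : ∑ i, g i ≤ ∑ i, f i) :
    ∑ i, f i * log (g i) ≤ ∑ i, f i * log (f i) := by
  have hpt : ∀ i, f i * log (g i) - f i * log (f i) ≤ g i - f i := by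
    intro i
    rcases eq_or_ne (f i) 0 with hfi | hfi
    · simp [hfi, hg i]
    have hfi' : 0 < f i := (hf i).lt_of_ne' hfi
    have hgi' : 0 < g i := (hg i).lt_of_ne' (hfg i hfi)
    have := mul_le_mul_of_nonneg_left (log_le_sub_one_of_pos (div_pos hgi' hfi')) hfi'.le
    rw [log_div hgi'.ne' hfi'.ne', mul_sub_one, mul_div_cancel₀ _ hfi] at this
    linarith
  have := sum_le_sum fun i (_ : i ∈ univ) => hpt i
  simp only [sum_sub_distrib] at this
  linarith

theorem shannonEntropy_le_neg_sum_mul_logb (hf : ∀ i, 0 ≤ f i) (hg : ∀ i, 0 ≤ g i)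
    (hfg : ∀ i, f i ≠ 0 → g i ≠ 0) (hsum : ∑ i, g i ≤ ∑ i, f i) :
    shannonEntropy f ≤ -∑ i, f i * logb 2 (g i) := by
  simp only [shannonEntropy, logb, ← mul_div_assoc, ← sum_div, neg_le_neg_iff]
  exact div_le_div_of_nonneg_right (sum_mul_log_le_sum_mul_log_self hf hg hfg hsum)
    (log_pos one_lt_two).le

end Gibbs

theorem shannonEntropy_comp_equiv {α β : Type*} [Fintype α] [Fintype β] (p : β → ℝ)
    (e : α ≃ β) : shannonEntropy (p ∘ e) = shannonEntropy p := by
  simp only [shannonEntropy, Function.comp_apply, e.sum_comp (fun b => p b * logb 2 (p b))]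

theorem mul_logb_mul_of_ne_zero {b t u v : ℝ} (h : t ≠ 0 → u ≠ 0 ∧ v ≠ 0) :
    t * logb b (u * v) = t * logb b u + t * logb b v := by
  rcases eq_or_ne t 0 with rfl | ht
  · simp
  · rw [logb_mul (h ht).1 (h ht).2, mul_add]

section Marginals

variable {α β : Type*} [Fintype α] [Fintype β]

theorem sum_mul_comp_fst (q : α × β → ℝ) (F : α → ℝ) :
    ∑ ab, q ab * F ab.1 = ∑ a, (∑ b, q (a, b)) * F a := by
  simp only [Fintype.sum_prod_type, sum_mul]

theorem sum_mul_comp_snd (q : α × β → ℝ) (F : β → ℝ) :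
    ∑ ab, q ab * F ab.2 = ∑ b, (∑ a, q (a, b)) * F b := by
  rw [Fintype.sum_prod_type, sum_comm]
  simp only [sum_mul]

theorem shannonEntropy_le_add_marginals (q : α × β → ℝ) (hq0 : ∀ ab, 0 ≤ q ab)
    (hq1 : ∑ ab, q ab = 1) :
    shannonEntropy q ≤
      shannonEntropy (fun a => ∑ b, q (a, b)) + shannonEntropy (fun b => ∑ a, q (a, b)) := by
  set qA : α → ℝ := fun a => ∑ b, q (a, b)
  set qB : β → ℝ := fun b => ∑ a, q (a, b)
  have hqA : ∀ a b, q (a, b) ≤ qA a := fun a b => single_le_sum (fun _ _ => hq0 _) (mem_univ b)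
  have hqB : ∀ a b, q (a, b) ≤ qB b := fun a b =>
    single_le_sum (f := fun a' => q (a', b)) (fun _ _ => hq0 _) (mem_univ a)
  have hsupp : ∀ ab : α × β, q ab ≠ 0 → qA ab.1 ≠ 0 ∧ qB ab.2 ≠ 0 := fun ⟨a, b⟩ h =>
    have h' := (hq0 _).lt_of_ne' h
    ⟨(h'.trans_le (hqA a b)).ne', (h'.trans_le (hqB a b)).ne'⟩
  have hA : ∑ a, qA a = 1 := by rw [← hq1, Fintype.sum_prod_type]
  have hB : ∑ b, qB b = 1 := by rw [← hq1, Fintype.sum_prod_type_right]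
  have hmass : ∑ ab : α × β, qA ab.1 * qB ab.2 = ∑ ab, q ab := by
    rw [Fintype.sum_prod_type, ← Fintype.sum_mul_sum, hA, hB, hq1, one_mul]
  have hcross : -∑ ab, q ab * logb 2 (qA ab.1 * qB ab.2) =
      shannonEntropy qA + shannonEntropy qB := by
    simp only [mul_logb_mul_of_ne_zero (hsupp _), sum_add_distrib, shannonEntropy]
    rw [sum_mul_comp_fst q (fun a => logb 2 (qA a)),
      sum_mul_comp_snd q (fun b => logb 2 (qB b))]
    ring
  calc shannonEntropy q ≤ -∑ ab, q ab * logb 2 (qA ab.1 * qB ab.2) :=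
        shannonEntropy_le_neg_sum_mul_logb hq0
          (fun _ => mul_nonneg (sum_nonneg fun _ _ => hq0 _) (sum_nonneg fun _ _ => hq0 _))
          (fun ab h => mul_ne_zero (hsupp ab h).1 (hsupp ab h).2) hmass.le
    _ = shannonEntropy qA + shannonEntropy qB := hcross

end Marginals

section CondIndep

variable {α β γ : Type*} [Fintype α] [Fintype β]

def IsCondIndep (p : α × β × γ → ℝ) : Prop :=
  ∀ x y z, (∑ x', ∑ y', p (x', y', z)) ≠ 0 →
    p (x, y, z) * (∑ x', ∑ y', p (x', y', z)) = (∑ y', p (x, y', z)) * (∑ x', p (x', y, z))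

variable {p : α × β × γ → ℝ}

theorem mul_logb_eq_of_isCondIndep (b : ℝ) (hp0 : ∀ q, 0 ≤ p q) (hci : IsCondIndep p)
    (x : α) (y : β) (z : γ) :
    p (x, y, z) * logb b (p (x, y, z)) =
      p (x, y, z) * logb b (∑ y', p (x, y', z)) + p (x, y, z) * logb b (∑ x', p (x', y, z)) -
        p (x, y, z) * logb b (∑ x', ∑ y', p (x', y', z)) := by
  rcases (hp0 (x, y, z)).eq_or_lt' with hzero | hpos
  · simp [hzero]
  have hXZ : 0 < ∑ y', p (x, y', z) :=
    hpos.trans_le (single_le_sum (f := fun y' => p (x, y', z)) (fun _ _ => hp0 _) (mem_univ y))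
  have hYZ : 0 < ∑ x', p (x', y, z) :=
    hpos.trans_le (single_le_sum (f := fun x' => p (x', y, z)) (fun _ _ => hp0 _) (mem_univ x))
  have hZ : 0 < ∑ x', ∑ y', p (x', y', z) :=
    hXZ.trans_le (single_le_sum (f := fun x' => ∑ y', p (x', y', z))
      (fun _ _ => sum_nonneg fun _ _ => hp0 _) (mem_univ x))
  rw [eq_div_of_mul_eq hZ.ne' (hci x y z hZ.ne'), logb_div (mul_pos hXZ hYZ).ne' hZ.ne',
    logb_mul hXZ.ne' hYZ.ne']
  ring

theorem shannonEntropy_eq_of_isCondIndep [Fintype γ] (hp0 : ∀ q, 0 ≤ p q)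
    (hci : IsCondIndep p) :
    shannonEntropy p =
      shannonEntropy (fun q : α × γ => ∑ y, p (q.1, y, q.2)) +
        shannonEntropy (fun q : β × γ => ∑ x, p (x, q.1, q.2)) -
          shannonEntropy (fun z => ∑ x, ∑ y, p (x, y, z)) := by
  have hXZ : ∑ q : α × β × γ, p q * logb 2 (∑ y', p (q.1, y', q.2.2)) =
      ∑ q : α × γ, (∑ y, p (q.1, y, q.2)) * logb 2 (∑ y, p (q.1, y, q.2)) := by
    simp only [Fintype.sum_prod_type, sum_mul]
    exact sum_congr rfl fun _ _ => sum_comm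
  have hYZ : ∑ q : α × β × γ, p q * logb 2 (∑ x', p (x', q.2.1, q.2.2)) =
      ∑ q : β × γ, (∑ x, p (x, q.1, q.2)) * logb 2 (∑ x, p (x, q.1, q.2)) := by
    simp only [Fintype.sum_prod_type, sum_mul]
    rw [sum_comm]
    exact sum_congr rfl fun _ _ => sum_comm
  have hZ : ∑ q : α × β × γ, p q * logb 2 (∑ x', ∑ y', p (x', y', q.2.2)) =
      ∑ z, (∑ x, ∑ y, p (x, y, z)) * logb 2 (∑ x, ∑ y, p (x, y, z)) := by
    simp only [Fintype.sum_prod_type, sum_mul]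
    exact (sum_congr rfl fun _ _ => sum_comm).trans sum_comm
  have hpt (q : α × β × γ) := mul_logb_eq_of_isCondIndep 2 hp0 hci q.1 q.2.1 q.2.2
  simp only [shannonEntropy, hpt, sum_add_distrib, sum_sub_distrib, hXZ, hYZ, hZ]
  ring

end CondIndep

/-- subadditivity of mutual information under conditional independence:
if `X` and `Y` are conditionally independent given `Z`, then
`I((X,Y);Z) ≤ I(X;Z) + I(Y;Z)`.  Here `p` is the joint pmf of `(X,Y,Z)`, and
conditional independence is expressed (whenever `P(Z=z) ≠ 0`) as
`P(X=x,Y=y,Z=z)·P(Z=z) = P(X=x,Z=z)·P(Y=y,Z=z)`. -/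
theorem statement3 {𝒳 𝒴 𝒵 : Type*} [Fintype 𝒳] [Fintype 𝒴] [Fintype 𝒵]
    (p : 𝒳 × 𝒴 × 𝒵 → ℝ) (hp0 : ∀ q, 0 ≤ p q) (hp1 : ∑ q, p q = 1)
    (hci : ∀ x y z, (∑ x', ∑ y', p (x', y', z)) ≠ 0 →
      p (x, y, z) * (∑ x', ∑ y', p (x', y', z)) =
        (∑ y', p (x, y', z)) * (∑ x', p (x', y, z))) :
    mutualInfoFin (fun q : (𝒳 × 𝒴) × 𝒵 => p (q.1.1, q.1.2, q.2)) ≤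
      mutualInfoFin (fun q : 𝒳 × 𝒵 => ∑ y, p (q.1, y, q.2)) +
        mutualInfoFin (fun q : 𝒴 × 𝒵 => ∑ x, p (x, q.1, q.2)) := by
  have hXYZ : shannonEntropy (fun q : (𝒳 × 𝒴) × 𝒵 => p (q.1.1, q.1.2, q.2)) =
      shannonEntropy p :=
    shannonEntropy_comp_equiv p (Equiv.prodAssoc 𝒳 𝒴 𝒵)
  have hchain := shannonEntropy_eq_of_isCondIndep hp0 hci
  have hsub := shannonEntropy_le_add_marginals (fun q : 𝒳 × 𝒴 => ∑ z, p (q.1, q.2, z))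
    (fun _ => sum_nonneg fun _ _ => hp0 _) (by simpa only [Fintype.sum_prod_type] using hp1)
  simp only [mutualInfoFin, hXYZ, Fintype.sum_prod_type, sum_comm (s := (univ : Finset 𝒵)),
    sum_comm (s := (univ : Finset 𝒴)) (t := (univ : Finset 𝒳))] at hsub ⊢
  linarith
end

section
/- Let K ⊂ [0,1]^N be a closed subset and 1 ≤ n ≤ N. For A ⊂ {1,…,N} let π_A : ℝ^N → ℝ^A denote coordinate projection. Then the N-dimensional Lebesgue measure of ⋃_{A : |A| ≥ n} π_A^{-1}(π_A K) (intersected with [0,1]^N) is at most 4^N · ℋ^n_∞(K, ‖·‖_∞). -/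
open Set MeasureTheory ENNReal

/-!
Fix a cover `K ⊆ ⋃ E_k`. For `|A| ≥ n` choose `B ⊆ A` with `|B| = n`; then
`π_A⁻¹(π_A K) ∩ [0,1]^N` lies in the union over `k` of the boxes whose sides along `B` are the
coordinate images of `E_k`, each of length at most `diam E_k`, and `[0,1]` elsewhere. So its
measure is at most `∑_k (diam E_k)^n`, and summing over the `2^N` sets `A` gives the bound with
`2^N ≤ 4^N`.
-/

/-- The `s`-dimensional Hausdorff content `ℋ^s_∞`: the infimum over countable covers
`K = ⋃ E_k` of `∑_k (diam E_k)^s` (diameters in the `ℓ^∞`-norm on `Fin N → ℝ`). -/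
noncomputable def hausdorffContentInf {X : Type*} [PseudoEMetricSpace X]
    (s : ℝ) (K : Set X) : ℝ≥0∞ :=
  ⨅ (E : ℕ → Set X) (_ : K ⊆ ⋃ k, E k), ∑' k, EMetric.diam (E k) ^ s

/-- `π_A⁻¹(π_A T) ∩ [0,1]^ι`. -/
def cubeCylinder {ι : Type*} (A : Finset ι) (T : Set (ι → ℝ)) : Set (ι → ℝ) :=
  {y ∈ Icc (0 : ι → ℝ) 1 | ∃ x ∈ T, ∀ i ∈ A, y i = x i}

namespace cubeCylinder

variable {ι : Type*}

lemma anti {A B : Finset ι} (hAB : A ⊆ B) (T : Set (ι → ℝ)) :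
    cubeCylinder B T ⊆ cubeCylinder A T := fun _ ⟨hy, x, hx, hagree⟩ =>
  ⟨hy, x, hx, fun i hi => hagree i (hAB hi)⟩

lemma subset_iUnion_of_subset_iUnion (A : Finset ι) {T : Set (ι → ℝ)} {E : ℕ → Set (ι → ℝ)}
    (hE : T ⊆ ⋃ k, E k) : cubeCylinder A T ⊆ ⋃ k, cubeCylinder A (E k) := by
  rintro y ⟨hy, x, hx, hagree⟩
  obtain ⟨k, hk⟩ := mem_iUnion.mp (hE hx)
  exact mem_iUnion.mpr ⟨k, hy, x, hk, hagree⟩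

variable [Fintype ι]

lemma volume_le_ediam_pow_card (A : Finset ι) (T : Set (ι → ℝ)) :
    volume (cubeCylinder A T) ≤ Metric.ediam T ^ A.card := by
  classical
  have hbox : cubeCylinder A T ⊆
      univ.pi fun i => if i ∈ A then Function.eval i '' T else Icc (0 : ℝ) 1 := by
    rintro y ⟨hy, x, hx, hagree⟩ i -
    dsimp only
    split_ifs with hi
    · exact ⟨x, hx, (hagree i hi).symm⟩
    · exact ⟨hy.1 i, hy.2 i⟩
  have hfactor (i : ι) : volume (if i ∈ A then Function.eval i '' T else Icc (0 : ℝ) 1) ≤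
      if i ∈ A then Metric.ediam T else 1 := by
    split_ifs
    · calc volume (Function.eval i '' T) ≤ Metric.ediam (Function.eval i '' T) :=
            Real.volume_le_diam _
        _ ≤ Metric.ediam T := by
            simpa using (LipschitzWith.eval (α := fun _ : ι => ℝ) i).ediam_image_le T
    · simp
  calc volume (cubeCylinder A T)
      ≤ ∏ i, volume (if i ∈ A then Function.eval i '' T else Icc (0 : ℝ) 1) :=
        (measure_mono hbox).trans_eq (volume_pi_pi _)
    _ ≤ ∏ i, if i ∈ A then Metric.ediam T else 1 := Finset.prod_le_prod' fun i _ => hfactor i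
    _ = Metric.ediam T ^ A.card := by simp [Finset.prod_ite_mem]

lemma volume_le_ediam_pow {n : ℕ} {A : Finset ι} (hA : n ≤ A.card) (T : Set (ι → ℝ)) :
    volume (cubeCylinder A T) ≤ Metric.ediam T ^ n := by
  obtain ⟨B, hBA, rfl⟩ := Finset.exists_subset_card_eq hA
  exact (measure_mono (anti hBA T)).trans (volume_le_ediam_pow_card B T)

lemma volume_le_hausdorffContentInf {n : ℕ} {A : Finset ι} (hA : n ≤ A.card)
    (K : Set (ι → ℝ)) : volume (cubeCylinder A K) ≤ hausdorffContentInf n K := by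
  refine le_iInf₂ fun E hE => ?_
  calc volume (cubeCylinder A K) ≤ volume (⋃ k, cubeCylinder A (E k)) :=
        measure_mono (subset_iUnion_of_subset_iUnion A hE)
    _ ≤ ∑' k, volume (cubeCylinder A (E k)) := measure_iUnion_le _
    _ ≤ ∑' k, Metric.ediam (E k) ^ (n : ℝ) := ENNReal.tsum_le_tsum fun k => by
        simpa only [ENNReal.rpow_natCast] using volume_le_ediam_pow hA (E k)

lemma volume_iUnion_le_hausdorffContentInf (n : ℕ) (K : Set (ι → ℝ)) :
    volume (⋃ (A : Finset ι) (_ : n ≤ A.card), cubeCylinder A K) ≤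
      2 ^ Fintype.card ι * hausdorffContentInf n K := by
  have hterm (A : Finset ι) :
      volume (⋃ (_ : n ≤ A.card), cubeCylinder A K) ≤ hausdorffContentInf n K := by
    by_cases hA : n ≤ A.card
    · simpa only [hA, iUnion_true] using volume_le_hausdorffContentInf hA K
    · simp only [hA, iUnion_false, measure_empty, zero_le]
  calc volume (⋃ (A : Finset ι) (_ : n ≤ A.card), cubeCylinder A K)
      ≤ ∑ A : Finset ι, volume (⋃ (_ : n ≤ A.card), cubeCylinder A K) :=
        measure_iUnion_fintype_le _ _
    _ ≤ ∑ _A : Finset ι, hausdorffContentInf n K := Finset.sum_le_sum fun A _ => hterm A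
    _ = 2 ^ Fintype.card ι * hausdorffContentInf n K := by
        simp [Finset.card_univ, Fintype.card_finset]

end cubeCylinder

theorem statement8_general {N : ℕ} (K : Set (Fin N → ℝ)) {n : ℕ} :
    MeasureTheory.volume
        (⋃ (A : Finset (Fin N)) (_ : n ≤ A.card),
          {y ∈ Set.Icc (0 : Fin N → ℝ) 1 | ∃ x ∈ K, ∀ i ∈ A, y i = x i}) ≤
      4 ^ N * hausdorffContentInf (n : ℝ) K := by
  calc _ ≤ 2 ^ Fintype.card (Fin N) * hausdorffContentInf n K :=
        cubeCylinder.volume_iUnion_le_hausdorffContentInf n K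
    _ = 2 ^ N * hausdorffContentInf n K := by rw [Fintype.card_fin]
    _ ≤ 4 ^ N * hausdorffContentInf n K := by gcongr; norm_num

/-- for a closed subset `K ⊆ [0,1]^N` and `1 ≤ n ≤ N`, the Lebesgue
measure of `⋃_{|A| ≥ n} π_A^{-1}(π_A K) ∩ [0,1]^N` is at most `4^N · ℋ^n_∞(K, ‖·‖_∞)`,
where `π_A` is the coordinate projection onto `A ⊆ {1,…,N}`. -/
theorem statement8 {N : ℕ} (K : Set (Fin N → ℝ)) (hK : IsClosed K)
    (hK1 : K ⊆ Set.Icc 0 1) {n : ℕ} (hn : 1 ≤ n) (hnN : n ≤ N) :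
    MeasureTheory.volume
        (⋃ (A : Finset (Fin N)) (_ : n ≤ A.card),
          {y ∈ Set.Icc (0 : Fin N → ℝ) 1 | ∃ x ∈ K, ∀ i ∈ A, y i = x i}) ≤
      4 ^ N * hausdorffContentInf (n : ℝ) K :=
  statement8_general K
end

section
/- Frostman-type measure on a compact metric space: there exists a Borel measure μ on a compact metric space (X,d) with total mass μ(X) = λ^s_δ(X,d) such that μ(E) ≤ (diam E)^s for every subset E ⊂ X with diam E < δ. -/
open Set MeasureTheory ENNReal

/-- The weighted Hausdorff content `λ^s_δ(X,d)`: the infimum of `∑ c_k (diam E_k)^s`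
over countable families `{(E_k, c_k)}` with finite weights `c_k`, `diam E_k < δ`, and
`∑ c_k · 1_{E_k} ≥ 1` on `X`. -/
noncomputable def wContent (X : Type*) [MetricSpace X] (s δ : ℝ) : ℝ≥0∞ :=
  ⨅ (E : ℕ → Set X) (c : ℕ → ℝ≥0∞) (_ : ∀ k, c k < ⊤)
    (_ : ∀ k, EMetric.diam (E k) < ENNReal.ofReal δ)
    (_ : ∀ x : X, 1 ≤ ∑' k, Set.indicator (E k) (fun _ => c k) x),
    ∑' k, c k * EMetric.diam (E k) ^ s

namespace S11

variable {X : Type*} [MetricSpace X]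

noncomputable def P (s δ : ℝ) (f : C(X, ℝ)) : ℝ≥0∞ :=
  ⨅ (E : ℕ → Set X) (c : ℕ → ℝ≥0∞) (_ : ∀ k, c k < ⊤)
    (_ : ∀ k, EMetric.diam (E k) < ENNReal.ofReal δ)
    (_ : ∀ x : X, ENNReal.ofReal (f x) ≤ ∑' k, Set.indicator (E k) (fun _ => c k) x),
    ∑' k, c k * EMetric.diam (E k) ^ s

lemma P_le {s δ : ℝ} (f : C(X, ℝ)) {E : ℕ → Set X} {c : ℕ → ℝ≥0∞}
    (h1 : ∀ k, c k < ⊤) (h2 : ∀ k, EMetric.diam (E k) < ENNReal.ofReal δ)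
    (h3 : ∀ x : X, ENNReal.ofReal (f x) ≤ ∑' k, Set.indicator (E k) (fun _ => c k) x) :
    P s δ f ≤ ∑' k, c k * EMetric.diam (E k) ^ s := by
  refine iInf_le_of_le E (iInf_le_of_le c ?_)
  exact iInf_le_of_le h1 (iInf_le_of_le h2 (iInf_le_of_le h3 le_rfl))

lemma P_bdd [CompactSpace X] {s δ : ℝ} (hδ : 0 < δ) (hs : 0 ≤ s) (f : C(X, ℝ)) :
    P s δ f < ⊤ := by
  set r : ℝ := δ / 3 with hrdef
  have hr : 0 < r := by positivity
  obtain ⟨t, ht⟩ := isCompact_univ.elim_finite_subcover (fun x : X => Metric.ball x r)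
    (fun x => Metric.isOpen_ball) (fun x _ => mem_iUnion.2 ⟨x, Metric.mem_ball_self hr⟩)
  classical
  set l := t.toList with hldef
  set n := l.length with hndef
  set M : ℝ≥0∞ := ENNReal.ofReal ‖f‖ with hMdef
  have hM : M < ⊤ := ENNReal.ofReal_lt_top
  set E : ℕ → Set X := fun k => if h : k < n then Metric.ball (l.get ⟨k, h⟩) r else ∅ with hEdef
  set c : ℕ → ℝ≥0∞ := fun k => if k < n then M else 0 with hcdef
  have hball : ∀ (y : X), EMetric.diam (Metric.ball y r) < ENNReal.ofReal δ := by
    intro y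
    have h1 : EMetric.diam (Metric.ball y r) ≤ 2 * ENNReal.ofReal r := by
      rw [← Metric.emetric_ball]; exact EMetric.diam_ball
    have h2 : (2 : ℝ≥0∞) * ENNReal.ofReal r = ENNReal.ofReal (2 * r) := by
      rw [ENNReal.ofReal_mul (by norm_num : (0:ℝ) ≤ 2), ENNReal.ofReal_ofNat]
    refine h1.trans_lt ?_
    rw [h2]
    exact ENNReal.ofReal_lt_ofReal_iff hδ |>.2 (by rw [hrdef]; linarith)
  have hdiam : ∀ k, EMetric.diam (E k) < ENNReal.ofReal δ := by
    intro k
    by_cases h : k < n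
    · simpa [hEdef, h] using hball _
    · simp [hEdef, h, EMetric.diam, ENNReal.ofReal_pos.2 hδ]
  have hcfin : ∀ k, c k < ⊤ := by
    intro k
    by_cases h : k < n <;> simp [hcdef, h, hM]
  have hcov : ∀ x : X, ENNReal.ofReal (f x) ≤ ∑' k, Set.indicator (E k) (fun _ => c k) x := by
    intro x
    have hx := ht (mem_univ x)
    simp only [mem_iUnion] at hx
    obtain ⟨i, hit, hxi⟩ := hx
    have hil : i ∈ l := by rw [hldef]; exact Finset.mem_toList.2 hit
    obtain ⟨j, hjl⟩ := List.get_of_mem hil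
    have hj : (j : ℕ) < n := j.2
    calc ENNReal.ofReal (f x) ≤ M := by
          exact ENNReal.ofReal_le_ofReal ((le_abs_self _).trans (f.norm_coe_le_norm x))
      _ = Set.indicator (E j) (fun _ => c j) x := by
          have hxE : x ∈ E (j : ℕ) := by
            rw [hEdef]; simp only [hj, dif_pos]; rw [hjl]; exact hxi
          rw [Set.indicator_of_mem hxE, hcdef]; simp [hj]
      _ ≤ ∑' k, Set.indicator (E k) (fun _ => c k) x := ENNReal.le_tsum _
  have hP := P_le (s := s) f hcfin hdiam hcov
  refine hP.trans_lt ?_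
  have hzero : ∀ k ∉ Finset.range n, c k * EMetric.diam (E k) ^ s = 0 := by
    intro k hk
    rw [Finset.mem_range, not_lt] at hk
    have : c k = 0 := by simp [hcdef, Nat.not_lt.2 hk]
    simp [this]
  rw [tsum_eq_sum hzero]
  refine ENNReal.sum_lt_top.2 fun k _ => ?_
  exact ENNReal.mul_lt_top (hcfin k) (ENNReal.rpow_lt_top_of_nonneg hs (hdiam k).ne_top)

lemma P_one (s δ : ℝ) : P (X := X) s δ 1 = wContent X s δ := by
  unfold P wContent
  simp only [ContinuousMap.coe_one, Pi.one_apply, ENNReal.ofReal_one]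

lemma P_nonpos {s δ : ℝ} (hδ : 0 < δ) {f : C(X, ℝ)} (hf : ∀ x, f x ≤ 0) :
    P s δ f = 0 := by
  refine le_antisymm ?_ zero_le
  have h := P_le (s := s) (δ := δ) f (E := fun _ => (∅ : Set X)) (c := fun _ => 0)
    (fun _ => ENNReal.zero_lt_top)
    (fun _ => by simp [EMetric.diam, EMetric.diam_empty, ENNReal.ofReal_pos.2 hδ])
    (fun x => by simp [ENNReal.ofReal_eq_zero.2 (hf x)])
  simpa using h

lemma tsum_interleave (A B : ℕ → ℝ≥0∞) :
    ∑' k, (if k % 2 = 0 then A (k / 2) else B (k / 2)) = (∑' k, A k) + (∑' k, B k) := by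
  rw [← tsum_even_add_odd ENNReal.summable ENNReal.summable]
  congr 1
  · refine tsum_congr fun k => ?_
    have h1 : (2 * k) % 2 = 0 := by omega
    have h2 : 2 * k / 2 = k := by omega
    simp [h1, h2]
  · refine tsum_congr fun k => ?_
    have h1 : (2 * k + 1) % 2 = 1 := by omega
    have h2 : (2 * k + 1) / 2 = k := by omega
    simp [h1, h2]


lemma exists_P_lt {s δ : ℝ} {f : C(X, ℝ)} {a : ℝ≥0∞} (h : P s δ f < a) :
    ∃ (E : ℕ → Set X) (c : ℕ → ℝ≥0∞), (∀ k, c k < ⊤) ∧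
      (∀ k, EMetric.diam (E k) < ENNReal.ofReal δ) ∧
      (∀ x : X, ENNReal.ofReal (f x) ≤ ∑' k, Set.indicator (E k) (fun _ => c k) x) ∧
      ∑' k, c k * EMetric.diam (E k) ^ s < a := by
  simp only [P, iInf_lt_iff] at h
  obtain ⟨E, c, h1, h2, h3, h4⟩ := h
  exact ⟨E, c, h1, h2, h3, h4⟩


lemma P_add {s δ : ℝ} (f g : C(X, ℝ)) :
    P s δ (f + g) ≤ P s δ f + P s δ g := by
  refine ENNReal.le_of_forall_pos_le_add fun ε hε hfin => ?_
  have hf : P s δ f ≠ ⊤ := fun h => by simp [h] at hfin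
  have hg : P s δ g ≠ ⊤ := fun h => by simp [h] at hfin
  have hε2 : ((ε : ℝ≥0∞) / 2) ≠ 0 :=
    (ENNReal.div_pos (ENNReal.coe_ne_zero.2 hε.ne') ENNReal.ofNat_ne_top).ne'
  obtain ⟨E1, c1, hc1, hd1, hm1, hs1⟩ := exists_P_lt (ENNReal.lt_add_right hf hε2)
  obtain ⟨E2, c2, hc2, hd2, hm2, hs2⟩ := exists_P_lt (ENNReal.lt_add_right hg hε2)
  classical
  set E : ℕ → Set X := fun k => if k % 2 = 0 then E1 (k / 2) else E2 (k / 2) with hE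
  set c : ℕ → ℝ≥0∞ := fun k => if k % 2 = 0 then c1 (k / 2) else c2 (k / 2) with hc
  have h1 : ∀ k, c k < ⊤ := fun k => by
    by_cases h : k % 2 = 0 <;> simp [hc, h, hc1 _, hc2 _]
  have h2 : ∀ k, EMetric.diam (E k) < ENNReal.ofReal δ := fun k => by
    by_cases h : k % 2 = 0 <;> simp [hE, h, hd1 _, hd2 _]
  have h3 : ∀ x : X, ENNReal.ofReal ((f + g) x) ≤
      ∑' k, Set.indicator (E k) (fun _ => c k) x := by
    intro x
    calc ENNReal.ofReal ((f + g) x) = ENNReal.ofReal (f x + g x) := by simp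
      _ ≤ ENNReal.ofReal (f x) + ENNReal.ofReal (g x) := ENNReal.ofReal_add_le
      _ ≤ (∑' k, Set.indicator (E1 k) (fun _ => c1 k) x) +
          ∑' k, Set.indicator (E2 k) (fun _ => c2 k) x := add_le_add (hm1 x) (hm2 x)
      _ = ∑' k, Set.indicator (E k) (fun _ => c k) x := by
          rw [← tsum_interleave]
          exact tsum_congr fun k => by by_cases h : k % 2 = 0 <;> simp [hE, hc, h]
  refine (P_le (f + g) h1 h2 h3).trans ?_
  have hcost : ∑' k, c k * EMetric.diam (E k) ^ s =
      (∑' k, c1 k * EMetric.diam (E1 k) ^ s) + ∑' k, c2 k * EMetric.diam (E2 k) ^ s := by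
    rw [← tsum_interleave]
    exact tsum_congr fun k => by by_cases h : k % 2 = 0 <;> simp [hE, hc, h]
  rw [hcost]
  calc (∑' k, c1 k * EMetric.diam (E1 k) ^ s) + ∑' k, c2 k * EMetric.diam (E2 k) ^ s
      ≤ (P s δ f + ↑ε / 2) + (P s δ g + ↑ε / 2) := add_le_add hs1.le hs2.le
    _ = P s δ f + P s δ g + ↑ε := by rw [add_add_add_comm, ENNReal.add_halves]

lemma P_smul_le {s δ : ℝ} {r : ℝ} (hr : 0 < r) (f : C(X, ℝ)) :
    P s δ (r • f) ≤ ENNReal.ofReal r * P s δ f := by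
  rcases eq_top_or_lt_top (P s δ f) with h | h
  · rw [h, ENNReal.mul_top (ENNReal.ofReal_pos.2 hr).ne']
    exact le_top
  refine ENNReal.le_of_forall_pos_le_add fun ε hε _ => ?_
  set R := ENNReal.ofReal r with hRdef
  have hR0 : R ≠ 0 := (ENNReal.ofReal_pos.2 hr).ne'
  have hRt : R ≠ ⊤ := ENNReal.ofReal_ne_top
  set η : ℝ≥0∞ := ↑ε / R with hηdef
  have hη : η ≠ 0 := (ENNReal.div_pos (ENNReal.coe_ne_zero.2 hε.ne') hRt).ne'
  obtain ⟨E, c, h1, h2, h3, h4⟩ := exists_P_lt (ENNReal.lt_add_right h.ne hη)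
  have h1' : ∀ k, R * c k < ⊤ := fun k => ENNReal.mul_lt_top hRt.lt_top (h1 k)
  have h3' : ∀ x : X, ENNReal.ofReal ((r • f) x) ≤
      ∑' k, Set.indicator (E k) (fun _ => R * c k) x := by
    intro x
    have he : ENNReal.ofReal ((r • f) x) = R * ENNReal.ofReal (f x) := by
      simp only [ContinuousMap.smul_apply, smul_eq_mul, hRdef]
      exact ENNReal.ofReal_mul hr.le
    rw [he]
    calc R * ENNReal.ofReal (f x) ≤ R * ∑' k, Set.indicator (E k) (fun _ => c k) x :=
          mul_le_mul_right (h3 x) R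
      _ = ∑' k, Set.indicator (E k) (fun _ => R * c k) x := by
          rw [← ENNReal.tsum_mul_left]
          exact tsum_congr fun k => by by_cases hx : x ∈ E k <;> simp [hx]
  refine (P_le (r • f) h1' h2 h3').trans ?_
  have hcost : ∑' k, (R * c k) * EMetric.diam (E k) ^ s =
      R * ∑' k, c k * EMetric.diam (E k) ^ s := by
    rw [← ENNReal.tsum_mul_left]
    exact tsum_congr fun k => by ring
  rw [hcost]
  calc R * ∑' k, c k * EMetric.diam (E k) ^ s ≤ R * (P s δ f + η) :=
        mul_le_mul_right h4.le R
    _ = R * P s δ f + R * η := mul_add _ _ _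
    _ = R * P s δ f + ↑ε := by rw [hηdef, ENNReal.mul_div_cancel hR0 hRt]

lemma P_smul {s δ : ℝ} {r : ℝ} (hr : 0 < r) (f : C(X, ℝ)) :
    P s δ (r • f) = ENNReal.ofReal r * P s δ f := by
  refine le_antisymm (P_smul_le hr f) ?_
  have h := P_smul_le (s := s) (δ := δ) (inv_pos.2 hr) (r • f)
  rw [smul_smul, inv_mul_cancel₀ hr.ne', one_smul] at h
  calc ENNReal.ofReal r * P s δ f
      ≤ ENNReal.ofReal r * (ENNReal.ofReal r⁻¹ * P s δ (r • f)) := mul_le_mul_right h _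
    _ = P s δ (r • f) := by
        rw [← mul_assoc, ← ENNReal.ofReal_mul hr.le, mul_inv_cancel₀ hr.ne',
          ENNReal.ofReal_one, one_mul]


end S11

open S11 in
/-- Frostman-type measure on a compact metric space: there is a Borel
measure `μ` on `X` with total mass `λ^s_δ(X,d)` such that `μ(E) ≤ (diam E)^s` for
every `E ⊆ X` with `diam E < δ`. -/
theorem statement11 {X : Type*} [MetricSpace X] [CompactSpace X]
    [MeasurableSpace X] [BorelSpace X] {δ s : ℝ} (hδ : 0 < δ) (hs : 0 ≤ s) :
    ∃ μ : Measure X, μ Set.univ = wContent X s δ ∧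
      ∀ E : Set X, EMetric.diam E < ENNReal.ofReal δ → μ E ≤ EMetric.diam E ^ s := by
  classical
  rcases isEmpty_or_nonempty X with hX | hX
  · refine ⟨0, ?_, fun E _ => zero_le⟩
    have h0 : wContent X s δ = 0 := by
      rw [← P_one (s := s) (δ := δ)]
      exact P_nonpos hδ fun x => (IsEmpty.false x).elim
    simp [h0]
  -- the sublinear functional
  set p : C(X, ℝ) → ℝ := fun f => (P s δ f).toReal with hpdef
  have hPfin : ∀ f : C(X, ℝ), P s δ f ≠ ⊤ := fun f => (P_bdd hδ hs f).ne
  have hone : (1 : C(X, ℝ)) ≠ 0 := by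
    intro h
    have := ContinuousMap.congr_fun h (Classical.arbitrary X)
    norm_num at this
  have hp1 : 0 ≤ p 1 := ENNReal.toReal_nonneg
  have Nhom : ∀ c : ℝ, 0 < c → ∀ f : C(X, ℝ), p (c • f) = c * p f := by
    intro c hc f
    simp only [hpdef, P_smul hc f, ENNReal.toReal_mul, ENNReal.toReal_ofReal hc.le]
  have Nadd : ∀ f g : C(X, ℝ), p (f + g) ≤ p f + p g := by
    intro f g
    have h := ENNReal.toReal_mono (ENNReal.add_ne_top.2 ⟨hPfin f, hPfin g⟩)
      (P_add (s := s) (δ := δ) f g)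
    simpa [hpdef, ENNReal.toReal_add (hPfin f) (hPfin g)] using h
  have hpnonpos : ∀ f : C(X, ℝ), (∀ x, f x ≤ 0) → p f = 0 := by
    intro f hf
    simp [hpdef, P_nonpos hδ hf]
  -- Hahn-Banach extension
  set f₀ : C(X, ℝ) →ₗ.[ℝ] ℝ := LinearPMap.mkSpanSingleton (1 : C(X, ℝ)) (p 1) hone with hf₀
  have hf₀le : ∀ z : f₀.domain, f₀ z ≤ p z := by
    rintro ⟨zv, hz⟩
    obtain ⟨cc, hcc⟩ := Submodule.mem_span_singleton.1 hz
    induction hcc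
    have happ : f₀ ⟨cc • 1, hz⟩ = cc • p 1 := LinearPMap.mkSpanSingleton'_apply _ _ _ cc _
    rw [happ]
    rcases lt_trichotomy cc 0 with hcn | hc0 | hcp
    · have h0 : p (cc • (1 : C(X, ℝ))) = 0 :=
        hpnonpos _ fun x => by
          simp only [ContinuousMap.smul_apply, ContinuousMap.one_apply, smul_eq_mul, mul_one]
          exact hcn.le
      rw [h0]
      exact mul_nonpos_of_nonpos_of_nonneg hcn.le hp1
    · subst hc0
      have h0 : p ((0 : ℝ) • (1 : C(X, ℝ))) = 0 := hpnonpos _ fun x => by simp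
      rw [zero_smul, h0]
    · rw [smul_eq_mul, Nhom cc hcp 1]
  obtain ⟨Λ, hΛeq, hΛle⟩ := exists_extension_of_le_sublinear f₀ p Nhom Nadd hf₀le
  have hΛ1 : Λ 1 = p 1 := by
    have h := hΛeq ⟨1, Submodule.mem_span_singleton_self 1⟩
    have h2 : (f₀ ⟨1, Submodule.mem_span_singleton_self 1⟩ : ℝ) = p 1 :=
      LinearPMap.mkSpanSingleton_apply ℝ ℝ hone (p 1)
    exact h.trans h2
  have hΛmono : ∀ f g : C(X, ℝ), (∀ x, f x ≤ g x) → Λ f ≤ Λ g := by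
    intro f g hfg
    have h := hΛle (f - g)
    have h0 : p (f - g) = 0 := hpnonpos _ fun x => by
      simp only [ContinuousMap.sub_apply, sub_nonpos]
      exact hfg x
    rw [map_sub, h0] at h
    linarith
  have hΛnonneg : ∀ f : C(X, ℝ), (∀ x, 0 ≤ f x) → 0 ≤ Λ f := by
    intro f hf
    have h := hΛmono 0 f fun x => by simpa using hf x
    simpa using h
  -- the content
  set kf : TopologicalSpace.Compacts X → ℝ≥0∞ := fun K =>
    ⨅ (f : C(X, ℝ)) (_ : ∀ x, 0 ≤ f x) (_ : ∀ x ∈ (K : Set X), 1 ≤ f x),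
      ENNReal.ofReal (Λ f) with hkfdef
  have kf_le : ∀ (K : TopologicalSpace.Compacts X) (f : C(X, ℝ)), (∀ x, 0 ≤ f x) →
      (∀ x ∈ (K : Set X), 1 ≤ f x) → kf K ≤ ENNReal.ofReal (Λ f) := fun K f h1 h2 =>
    iInf_le_of_le f (iInf_le_of_le h1 (iInf_le_of_le h2 le_rfl))
  have kf_fin : ∀ K, kf K ≠ ⊤ := fun K =>
    ((kf_le K 1 (fun _ => by norm_num) fun x _ => by norm_num).trans_lt
      ENNReal.ofReal_lt_top).ne
  have kf_mono : ∀ K1 K2 : TopologicalSpace.Compacts X, (K1 : Set X) ⊆ K2 → kf K1 ≤ kf K2 := by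
    intro K1 K2 hK
    refine le_iInf fun f => le_iInf fun h1 => le_iInf fun h2 => ?_
    exact kf_le K1 f h1 fun x hx => h2 x (hK hx)
  have kf_suple : ∀ K1 K2 : TopologicalSpace.Compacts X, kf (K1 ⊔ K2) ≤ kf K1 + kf K2 := by
    intro K1 K2
    refine ENNReal.le_of_forall_pos_le_add fun ε hε _ => ?_
    have hε2 : ((ε : ℝ≥0∞) / 2) ≠ 0 :=
      (ENNReal.div_pos (ENNReal.coe_ne_zero.2 hε.ne') ENNReal.ofNat_ne_top).ne'
    have h1 := ENNReal.lt_add_right (kf_fin K1) hε2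
    have h2 := ENNReal.lt_add_right (kf_fin K2) hε2
    rw [hkfdef] at h1 h2
    simp only [iInf_lt_iff] at h1 h2
    obtain ⟨g1, hg1p, hg1b, hg1v⟩ := h1
    obtain ⟨g2, hg2p, hg2b, hg2v⟩ := h2
    have hsum : kf (K1 ⊔ K2) ≤ ENNReal.ofReal (Λ (g1 + g2)) := by
      refine kf_le _ _ (fun x => add_nonneg (hg1p x) (hg2p x)) fun x hx => ?_
      rcases (by exact_mod_cast hx : x ∈ (K1 : Set X) ∪ (K2 : Set X)) with hx1 | hx2
      · calc (1 : ℝ) ≤ g1 x := hg1b x hx1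
          _ ≤ g1 x + g2 x := le_add_of_nonneg_right (hg2p x)
          _ = (g1 + g2) x := rfl
      · calc (1 : ℝ) ≤ g2 x := hg2b x hx2
          _ ≤ g1 x + g2 x := le_add_of_nonneg_left (hg1p x)
          _ = (g1 + g2) x := rfl
    refine hsum.trans ?_
    rw [map_add]
    calc ENNReal.ofReal (Λ g1 + Λ g2) ≤ ENNReal.ofReal (Λ g1) + ENNReal.ofReal (Λ g2) :=
          ENNReal.ofReal_add_le
      _ ≤ (kf K1 + ↑ε / 2) + (kf K2 + ↑ε / 2) := add_le_add hg1v.le hg2v.le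
      _ = kf K1 + kf K2 + ↑ε := by rw [add_add_add_comm, ENNReal.add_halves]
  have kf_supdisj : ∀ K1 K2 : TopologicalSpace.Compacts X, Disjoint (K1 : Set X) K2 →
      kf (K1 ⊔ K2) = kf K1 + kf K2 := by
    intro K1 K2 hdisj
    refine le_antisymm (kf_suple K1 K2) ?_
    refine le_iInf fun f => le_iInf fun hf0 => le_iInf fun hf1 => ?_
    obtain ⟨g, hg0, hg1, hg01⟩ := exists_continuous_zero_one_of_isClosed
      K2.isCompact.isClosed K1.isCompact.isClosed hdisj.symm
    set q1 : C(X, ℝ) := f * g with hq1def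
    set q2 : C(X, ℝ) := f * (1 - g) with hq2def
    have hq1p : ∀ x, 0 ≤ q1 x := fun x => mul_nonneg (hf0 x) (hg01 x).1
    have hq2p : ∀ x, 0 ≤ q2 x := fun x => mul_nonneg (hf0 x) (by
      have := (hg01 x).2
      simp only [hq2def, ContinuousMap.sub_apply, ContinuousMap.one_apply]
      linarith)
    have hb1 : kf K1 ≤ ENNReal.ofReal (Λ q1) := by
      refine kf_le _ _ hq1p fun x hx => ?_
      have hfx : (1 : ℝ) ≤ f x := hf1 x (by exact_mod_cast Or.inl hx)
      have hgx : g x = 1 := hg1 hx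
      simp only [hq1def, ContinuousMap.mul_apply, hgx, mul_one]
      exact hfx
    have hb2 : kf K2 ≤ ENNReal.ofReal (Λ q2) := by
      refine kf_le _ _ hq2p fun x hx => ?_
      have hfx : (1 : ℝ) ≤ f x := hf1 x (by exact_mod_cast Or.inr hx)
      have hgx : g x = 0 := hg0 hx
      simp only [hq2def, ContinuousMap.mul_apply, ContinuousMap.sub_apply,
        ContinuousMap.one_apply, hgx, sub_zero, mul_one]
      exact hfx
    have hq12 : q1 + q2 = f := by
      ext x
      simp only [hq1def, hq2def, ContinuousMap.add_apply, ContinuousMap.mul_apply,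
        ContinuousMap.sub_apply, ContinuousMap.one_apply]
      ring
    calc kf K1 + kf K2 ≤ ENNReal.ofReal (Λ q1) + ENNReal.ofReal (Λ q2) := add_le_add hb1 hb2
      _ = ENNReal.ofReal (Λ q1 + Λ q2) :=
          (ENNReal.ofReal_add (hΛnonneg _ hq1p) (hΛnonneg _ hq2p)).symm
      _ = ENNReal.ofReal (Λ f) := by rw [← map_add, hq12]
  set κ : Content X :=
    { toFun := fun K => (kf K).toNNReal
      mono' := fun K1 K2 h => ENNReal.toNNReal_mono (kf_fin K2) (kf_mono K1 K2 h)
      sup_disjoint' := fun K1 K2 hd _ _ => by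
        simp only [kf_supdisj K1 K2 hd, ENNReal.toNNReal_add (kf_fin K1) (kf_fin K2)]
      sup_le' := fun K1 K2 => by
        have h := ENNReal.toNNReal_mono (ENNReal.add_ne_top.2 ⟨kf_fin K1, kf_fin K2⟩)
          (kf_suple K1 K2)
        rwa [ENNReal.toNNReal_add (kf_fin K1) (kf_fin K2)] at h } with hκdef
  have hκcoe : ∀ K, (κ K : ℝ≥0∞) = kf K := fun K => ENNReal.coe_toNNReal (kf_fin K)
  refine ⟨κ.measure, ?_, ?_⟩
  · -- total mass
    have h1 : κ.measure Set.univ = κ.outerMeasure Set.univ := κ.measure_apply MeasurableSet.univ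
    have h2 : κ.outerMeasure Set.univ = κ.innerContent ⟨Set.univ, isOpen_univ⟩ :=
      κ.outerMeasure_opens ⟨Set.univ, isOpen_univ⟩
    have h3 : κ.innerContent ⟨Set.univ, isOpen_univ⟩ = κ ⟨Set.univ, isCompact_univ⟩ :=
      κ.innerContent_of_isCompact isCompact_univ isOpen_univ
    have h5 : kf ⟨Set.univ, isCompact_univ⟩ = ENNReal.ofReal (Λ 1) := by
      refine le_antisymm (kf_le _ 1 (fun _ => by norm_num) fun x _ => by norm_num) ?_
      refine le_iInf fun f => le_iInf fun hf0 => le_iInf fun hf1 => ?_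
      exact ENNReal.ofReal_le_ofReal (hΛmono 1 f fun x => hf1 x (Set.mem_univ x))
    have h6 : ENNReal.ofReal (Λ 1) = P (X := X) s δ 1 := by
      rw [hΛ1, hpdef]
      exact ENNReal.ofReal_toReal (hPfin 1)
    rw [h1, h2, h3, hκcoe, h5, h6, P_one]
  · -- measure bound
    have key : ∀ (U : Set X) (hU : IsOpen U), EMetric.diam U < ENNReal.ofReal δ →
        κ.innerContent ⟨U, hU⟩ ≤ EMetric.diam U ^ s := by
      intro U hU hdU
      refine iSup₂_le fun K' hK' => ?_
      obtain ⟨g, hg0, hg1, hg01⟩ := exists_continuous_zero_one_of_isClosed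
        hU.isClosed_compl K'.isCompact.isClosed (disjoint_compl_left.mono_right hK')
      have hgP : P s δ g ≤ EMetric.diam U ^ s := by
        have hle := P_le (s := s) (δ := δ) g (E := fun k => if k = 0 then U else ∅)
          (c := fun k => if k = 0 then 1 else 0)
          (fun k => by by_cases h : k = 0 <;> simp [h])
          (fun k => by
            by_cases h : k = 0 <;> simp [h, hdU, EMetric.diam, ENNReal.ofReal_pos.2 hδ] <;> exact hdU)
          (fun x => by
            by_cases hx : x ∈ U
            · refine le_trans ?_ (ENNReal.le_tsum 0)
              have hind : Set.indicator (if 0 = 0 then U else ∅)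
                  (fun _ => if 0 = 0 then (1 : ℝ≥0∞) else 0) x = 1 := by
                simp [Set.indicator_of_mem hx]
              rw [hind]
              exact ENNReal.ofReal_le_one.2 (hg01 x).2
            · have : g x = 0 := hg0 hx
              simp [this])
        refine hle.trans (le_of_eq ?_)
        calc ∑' k, (if k = 0 then (1:ℝ≥0∞) else 0) * EMetric.diam
              (if k = 0 then U else (∅ : Set X)) ^ s
            = ∑' k, if k = 0 then EMetric.diam U ^ s else 0 :=
              tsum_congr fun k => by by_cases h : k = 0 <;> simp [h]
          _ = EMetric.diam U ^ s := tsum_ite_eq 0 _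
      have h1 : (κ K' : ℝ≥0∞) ≤ ENNReal.ofReal (Λ g) := by
        rw [hκcoe]
        exact kf_le K' g (fun x => (hg01 x).1) fun x hx => (hg1 hx).ge
      calc (κ K' : ℝ≥0∞) ≤ ENNReal.ofReal (Λ g) := h1
        _ ≤ ENNReal.ofReal (p g) := ENNReal.ofReal_le_ofReal (hΛle g)
        _ = P s δ g := by rw [hpdef]; exact ENNReal.ofReal_toReal (hPfin g)
        _ ≤ EMetric.diam U ^ s := hgP
    intro E hdE
    set d := EMetric.diam E with hddef
    have hdne : d ≠ ⊤ := (hdE.trans ENNReal.ofReal_lt_top).ne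
    have step : ∀ cc : ℝ≥0∞, d < cc → cc < ENNReal.ofReal δ → κ.measure E ≤ cc ^ s := by
      intro cc hc1 hc2
      obtain ⟨r, hr, hrc⟩ := ENNReal.lt_iff_exists_add_pos_lt.1 hc1
      set U := Metric.thickening ((r / 2 : NNReal) : ℝ) E with hUdef
      have hUopen : IsOpen U := Metric.isOpen_thickening
      have hEU : E ⊆ U :=
        Metric.self_subset_thickening (by exact_mod_cast (div_pos hr two_pos)) E
      have hdU : EMetric.diam U ≤ d + r := by
        have h := Metric.ediam_thickening_le (ε := r / 2) (s := E)
        have h2 : (2 : ℝ≥0∞) * ((r / 2 : NNReal) : ℝ≥0∞) = (r : ℝ≥0∞) := by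
          rw [← ENNReal.coe_ofNat, ← ENNReal.coe_mul]
          norm_cast
          rw [mul_comm, div_mul_cancel₀ _ two_ne_zero]
        rw [h2] at h
        exact h
      have hdU' : EMetric.diam U < ENNReal.ofReal δ :=
        lt_of_le_of_lt hdU (hrc.trans hc2)
      calc κ.measure E ≤ κ.measure U := measure_mono hEU
        _ = κ.outerMeasure U := κ.measure_apply hUopen.measurableSet
        _ = κ.innerContent ⟨U, hUopen⟩ := κ.outerMeasure_opens ⟨U, hUopen⟩
        _ ≤ EMetric.diam U ^ s := key U hUopen hdU'
        _ ≤ cc ^ s := ENNReal.rpow_le_rpow (hdU.trans hrc.le) hs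
    refine ENNReal.le_of_forall_pos_le_add fun ε hε hfin => ?_
    have hlt : d ^ s < d ^ s + ε :=
      ENNReal.lt_add_right hfin.ne (ENNReal.coe_ne_zero.2 hε.ne')
    have hcont : ContinuousAt (fun x : ℝ≥0∞ => x ^ s) d :=
      ENNReal.continuous_rpow_const.continuousAt
    have hev : ∀ᶠ cc in nhds d, cc ^ s < d ^ s + ↑ε := hcont (Iio_mem_nhds hlt)
    have hev3 : ∀ᶠ cc in nhds d, cc < ENNReal.ofReal δ := isOpen_Iio.eventually_mem hdE
    have hne : (nhdsWithin d (Set.Ioi d)).NeBot :=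
      nhdsGT_neBot_of_exists_gt ⟨⊤, hdne.lt_top⟩
    have hev4 : ∀ᶠ cc in nhdsWithin d (Set.Ioi d), κ.measure E ≤ d ^ s + ↑ε := by
      filter_upwards [hev.filter_mono nhdsWithin_le_nhds,
        hev3.filter_mono nhdsWithin_le_nhds, self_mem_nhdsWithin] with cc h1 h2 h3
      exact (step cc h3 h2).trans h1.le
    obtain ⟨cc, hcc⟩ := hev4.exists
    exact hcc
end

section
/- Every compact metric space admits a dominated metric with tame growth of covering numbers: for every compact metric space (X,d) there exists a compatible metric d' on X with d'(x,y) ≤ d(x,y) for all x,y, such that for every δ > 0, ε^δ · log #(X,d',ε) → 0 as ε → 0. -/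
open Set Filter Topology

/-- The `ε`-covering number of a set-with-distance-function: the minimum `n` such that
the space is covered by `n` sets, within each of which all distances are `< ε`. -/
noncomputable def covNum {X : Type*} (d : X → X → ℝ) (ε : ℝ) : ℕ :=
  sInf {n : ℕ | ∃ U : Fin n → Set X, (⋃ i, U i) = Set.univ ∧
    ∀ i, ∀ x ∈ U i, ∀ y ∈ U i, d x y < ε}

section Aux

variable {X : Type*} [MetricSpace X]

/-- The pulled-back Hilbert-cube-style distance. -/
noncomputable def newDist (u : ℕ → X) (x y : X) : ℝ :=
  ∑' i : ℕ, (2 : ℝ)⁻¹ ^ (i + 1) * |dist x (u i) - dist y (u i)|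

lemma htsum_geom : ∑' i : ℕ, (2 : ℝ)⁻¹ ^ (i + 1) = 1 := by
  have h : ∀ i : ℕ, (2 : ℝ)⁻¹ ^ (i + 1) = (2:ℝ)⁻¹ ^ i * 2⁻¹ := fun i => pow_succ _ _
  rw [tsum_congr h, tsum_mul_right, tsum_geometric_of_lt_one (by norm_num) (by norm_num)]
  norm_num

lemma hsummable_geom : Summable (fun i : ℕ => (2 : ℝ)⁻¹ ^ (i + 1)) := by
  have := (summable_geometric_of_lt_one (r := (2:ℝ)⁻¹) (by norm_num) (by norm_num)).mul_right (2:ℝ)⁻¹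
  exact this.congr fun i => (pow_succ _ _).symm

lemma newDist_summable (u : ℕ → X) (x y : X) :
    Summable (fun i : ℕ => (2 : ℝ)⁻¹ ^ (i + 1) * |dist x (u i) - dist y (u i)|) := by
  apply Summable.of_nonneg_of_le (fun i => by positivity)
    (fun i => ?_) (hsummable_geom.mul_right (dist x y))
  exact mul_le_mul_of_nonneg_left (abs_dist_sub_le x y (u i)) (by positivity)

lemma newDist_le_dist (u : ℕ → X) (x y : X) : newDist u x y ≤ dist x y := by
  have h1 : newDist u x y ≤ ∑' i : ℕ, (2 : ℝ)⁻¹ ^ (i + 1) * dist x y := by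
    apply Summable.tsum_le_tsum (fun i => ?_) (newDist_summable u x y) (hsummable_geom.mul_right _)
    exact mul_le_mul_of_nonneg_left (abs_dist_sub_le x y (u i)) (by positivity)
  rwa [tsum_mul_right, htsum_geom, one_mul] at h1

lemma newDist_nonneg (u : ℕ → X) (x y : X) : 0 ≤ newDist u x y :=
  tsum_nonneg fun i => by positivity

lemma newDist_self (u : ℕ → X) (x : X) : newDist u x x = 0 := by
  simp [newDist]

lemma newDist_comm (u : ℕ → X) (x y : X) : newDist u x y = newDist u y x := by
  unfold newDist
  exact tsum_congr fun i => by rw [abs_sub_comm]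

lemma newDist_triangle (u : ℕ → X) (x y z : X) :
    newDist u x z ≤ newDist u x y + newDist u y z := by
  have h1 : newDist u x z ≤ ∑' i : ℕ, ((2 : ℝ)⁻¹ ^ (i + 1) * |dist x (u i) - dist y (u i)|
      + (2 : ℝ)⁻¹ ^ (i + 1) * |dist y (u i) - dist z (u i)|) := by
    apply Summable.tsum_le_tsum (fun i => ?_) (newDist_summable u x z)
      ((newDist_summable u x y).add (newDist_summable u y z))
    rw [← mul_add]
    exact mul_le_mul_of_nonneg_left (abs_sub_le _ _ _) (by positivity)
  rwa [Summable.tsum_add (newDist_summable u x y) (newDist_summable u y z)] at h1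

lemma newDist_eq_zero (u : ℕ → X) (hu : DenseRange u) {x y : X}
    (h : newDist u x y = 0) : x = y := by
  have hterm : ∀ i : ℕ, (2 : ℝ)⁻¹ ^ (i + 1) * |dist x (u i) - dist y (u i)| = 0 := by
    intro i
    have hle : (2 : ℝ)⁻¹ ^ (i + 1) * |dist x (u i) - dist y (u i)| ≤ newDist u x y :=
      Summable.le_tsum (newDist_summable u x y) i (fun j _ => by positivity)
    have : (0:ℝ) ≤ (2 : ℝ)⁻¹ ^ (i + 1) * |dist x (u i) - dist y (u i)| := by positivity
    linarith [h ▸ hle]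
  have hd : ∀ i : ℕ, dist x (u i) = dist y (u i) := by
    intro i
    have := hterm i
    have h2 : |dist x (u i) - dist y (u i)| = 0 := by
      have hp : ((2:ℝ)⁻¹ ^ (i+1)) ≠ 0 := by positivity
      exact (mul_eq_zero.1 this).resolve_left hp
    linarith [abs_eq_zero.1 h2, sub_eq_zero.1 (abs_eq_zero.1 h2)]
  by_contra hne
  have hpos : 0 < dist x y := dist_pos.2 hne
  obtain ⟨i, hi⟩ := (Metric.denseRange_iff.1 hu) x (dist x y / 2) (by linarith)
  have h1 : dist x y ≤ dist x (u i) + dist y (u i) := dist_triangle_right x y (u i)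
  rw [← hd i] at h1
  linarith

end Aux

lemma covNum_newDist_le {X : Type*} [MetricSpace X] [CompactSpace X] (u : ℕ → X)
    {ε : ℝ} (hε : 0 < ε) :
    covNum (newDist u) ε ≤
      (⌊2 * (Metric.diam (Set.univ : Set X) + 1) / ε⌋₊ + 1) ^
        ⌈Real.logb 2 (4 * (Metric.diam (Set.univ : Set X) + 1) / ε)⌉₊ := by
  set D := Metric.diam (Set.univ : Set X) + 1 with hDdef
  have hD1 : 1 ≤ D := le_add_of_nonneg_left Metric.diam_nonneg
  have hD0 : 0 < D := lt_of_lt_of_le one_pos hD1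
  have hdist : ∀ x y : X, dist x y ≤ D := fun x y =>
    le_trans (Metric.dist_le_diam_of_mem isCompact_univ.isBounded (Set.mem_univ x)
      (Set.mem_univ y)) (by linarith)
  set N := ⌈Real.logb 2 (4 * D / ε)⌉₊ with hN
  set M := ⌊2 * D / ε⌋₊ + 1 with hM
  have hη : (0:ℝ) < ε / 2 := by linarith
  have hpow : 4 * D / ε ≤ (2:ℝ) ^ N := by
    have h1 : Real.logb 2 (4 * D / ε) ≤ (N : ℝ) := Nat.le_ceil _
    have h2 : 4 * D / ε ≤ (2:ℝ) ^ (N:ℝ) :=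
      (Real.logb_le_iff_le_rpow one_lt_two (by positivity)).1 h1
    rwa [Real.rpow_natCast] at h2
  have hfloor_lt : ∀ (x : X) (i : ℕ), ⌊dist x (u i) / (ε/2)⌋₊ < M := by
    intro x i
    have hle : dist x (u i) / (ε/2) ≤ 2 * D / ε := by
      rw [div_le_div_iff₀ hη hε]
      nlinarith [hdist x (u i), dist_nonneg (x := x) (y := u i)]
    exact lt_of_le_of_lt (Nat.floor_le_floor hle) (Nat.lt_succ_self _)
  set F : X → (Fin N → Fin M) := fun x i => ⟨⌊dist x (u i) / (ε/2)⌋₊, hfloor_lt x i⟩ with hF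
  apply Nat.sInf_le
  refine ⟨fun j => {x | F x = finFunctionFinEquiv.symm j}, ?_, ?_⟩
  · apply Set.eq_univ_of_forall
    intro x
    exact Set.mem_iUnion.2 ⟨finFunctionFinEquiv (F x), by simp⟩
  · rintro j x hx y hy
    have hFxy : F x = F y := hx.trans hy.symm
    have habs : ∀ i : ℕ, i < N → |dist x (u i) - dist y (u i)| ≤ ε/2 := by
      intro i hi
      have hk' : ⌊dist x (u i) / (ε/2)⌋₊ = ⌊dist y (u i) / (ε/2)⌋₊ := by
        simpa [hF] using congrArg Fin.val (congrFun hFxy ⟨i, hi⟩)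
      have hx1 : dist x (u i) < (⌊dist x (u i) / (ε/2)⌋₊ + 1) * (ε/2) := by
        have h := Nat.lt_floor_add_one (dist x (u i) / (ε/2))
        rwa [div_lt_iff₀ hη] at h
      have hx2 : (⌊dist x (u i) / (ε/2)⌋₊ : ℝ) * (ε/2) ≤ dist x (u i) := by
        have h := Nat.floor_le (show (0:ℝ) ≤ dist x (u i)/(ε/2) by positivity)
        rwa [← le_div_iff₀ hη]
      have hy1 : dist y (u i) < (⌊dist y (u i) / (ε/2)⌋₊ + 1) * (ε/2) := by
        have h := Nat.lt_floor_add_one (dist y (u i) / (ε/2))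
        rwa [div_lt_iff₀ hη] at h
      have hy2 : (⌊dist y (u i) / (ε/2)⌋₊ : ℝ) * (ε/2) ≤ dist y (u i) := by
        have h := Nat.floor_le (show (0:ℝ) ≤ dist y (u i)/(ε/2) by positivity)
        rwa [← le_div_iff₀ hη]
      rw [hk'] at hx1 hx2
      rw [abs_sub_le_iff]
      constructor <;> nlinarith
    have hsplit := Summable.sum_add_tsum_nat_add (f := fun i : ℕ =>
      (2:ℝ)⁻¹ ^ (i+1) * |dist x (u i) - dist y (u i)|) N (newDist_summable u x y)
    have hhead : ∑ i ∈ Finset.range N, (2:ℝ)⁻¹^(i+1) * |dist x (u i) - dist y (u i)| ≤ ε/2 := by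
      have h1 : ∑ i ∈ Finset.range N, (2:ℝ)⁻¹^(i+1) * |dist x (u i) - dist y (u i)|
          ≤ ∑ i ∈ Finset.range N, (2:ℝ)⁻¹^(i+1) * (ε/2) :=
        Finset.sum_le_sum fun i hi =>
          mul_le_mul_of_nonneg_left (habs i (Finset.mem_range.1 hi)) (by positivity)
      have h2 : ∑ i ∈ Finset.range N, (2:ℝ)⁻¹^(i+1) * (ε/2)
          = (∑ i ∈ Finset.range N, (2:ℝ)⁻¹^(i+1)) * (ε/2) := by rw [Finset.sum_mul]
      have h3 : (∑ i ∈ Finset.range N, (2:ℝ)⁻¹^(i+1)) ≤ 1 := by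
        rw [← htsum_geom]
        exact Summable.sum_le_tsum _ (fun i _ => by positivity) hsummable_geom
      have h4 : (∑ i ∈ Finset.range N, (2:ℝ)⁻¹^(i+1)) * (ε/2) ≤ 1 * (ε/2) :=
        mul_le_mul_of_nonneg_right h3 (le_of_lt hη)
      linarith
    have htail : ∑' i : ℕ, (2:ℝ)⁻¹^(i+N+1) * |dist x (u (i+N)) - dist y (u (i+N))| ≤ ε/4 := by
      have hb : ∀ i : ℕ, (2:ℝ)⁻¹^(i+N+1) * |dist x (u (i+N)) - dist y (u (i+N))|
          ≤ (2:ℝ)⁻¹^(i+1) * ((2:ℝ)⁻¹^N * D) := by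
        intro i
        have h1 : |dist x (u (i+N)) - dist y (u (i+N))| ≤ D :=
          le_trans (abs_dist_sub_le _ _ _) (hdist x y)
        have h2 : (2:ℝ)⁻¹^(i+N+1) * |dist x (u (i+N)) - dist y (u (i+N))|
            ≤ (2:ℝ)⁻¹^(i+N+1) * D := mul_le_mul_of_nonneg_left h1 (by positivity)
        have h3 : (2:ℝ)⁻¹^(i+N+1) * D = (2:ℝ)⁻¹^(i+1) * ((2:ℝ)⁻¹^N * D) := by
          rw [show i+N+1 = (i+1)+N by ring, pow_add]; ring
        linarith
      have hsummable_tail : Summable (fun i : ℕ =>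
          (2:ℝ)⁻¹^(i+N+1) * |dist x (u (i+N)) - dist y (u (i+N))|) :=
        (summable_nat_add_iff (f := fun i : ℕ => (2:ℝ)⁻¹^(i+1) * |dist x (u i) - dist y (u i)|) N).2 (newDist_summable u x y)
      have h2 : ∑' i : ℕ, (2:ℝ)⁻¹^(i+N+1) * |dist x (u (i+N)) - dist y (u (i+N))|
          ≤ ∑' i : ℕ, (2:ℝ)⁻¹^(i+1) * ((2:ℝ)⁻¹^N * D) :=
        Summable.tsum_le_tsum hb hsummable_tail (hsummable_geom.mul_right _)
      have h3 : ∑' i : ℕ, (2:ℝ)⁻¹^(i+1) * ((2:ℝ)⁻¹^N * D) = (2:ℝ)⁻¹^N * D := by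
        rw [tsum_mul_right, htsum_geom, one_mul]
      have h4 : (2:ℝ)⁻¹^N * D ≤ ε/4 := by
        have h2N : (0:ℝ) < 2^N := by positivity
        rw [div_le_iff₀ hε] at hpow
        rw [inv_pow]
        rw [inv_mul_le_iff₀ h2N]
        nlinarith
      linarith
    have heq : newDist u x y
        = ∑ i ∈ Finset.range N, (2:ℝ)⁻¹^(i+1) * |dist x (u i) - dist y (u i)|
          + ∑' i : ℕ, (2:ℝ)⁻¹^(i+N+1) * |dist x (u (i+N)) - dist y (u (i+N))| := by
      rw [newDist, ← hsplit]
    rw [heq]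
    linarith




lemma newDist_abs_sub {X : Type*} [MetricSpace X] (u : ℕ → X) (x y z : X) :
    |newDist u x y - newDist u x z| ≤ dist y z := by
  have h1 := newDist_triangle u x z y
  have h2 := newDist_triangle u x y z
  have h3 := newDist_le_dist u y z
  have h4 := newDist_comm u z y
  have h5 := newDist_le_dist u z y
  rw [abs_sub_le_iff]
  constructor
  · have := dist_comm y z; linarith
  · have := dist_comm y z; linarith

lemma tendsto_rpow_mul_sq_log (b : ℝ) {δ : ℝ} (hδ : 0 < δ) :
    Filter.Tendsto (fun ε : ℝ => ε ^ δ * (b - Real.logb 2 ε) ^ 2)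
      (nhdsWithin 0 (Set.Ioi 0)) (nhds 0) := by
  have hT1 : Filter.Tendsto (fun ε : ℝ => ε ^ δ) (nhdsWithin 0 (Set.Ioi 0)) (nhds 0) := by
    have h := (Real.continuousAt_rpow_const 0 δ (Or.inr hδ.le)).tendsto
    rw [Real.zero_rpow hδ.ne'] at h
    exact h.mono_left nhdsWithin_le_nhds
  have hT2 : Filter.Tendsto (fun ε : ℝ => Real.log ε * ε ^ δ)
      (nhdsWithin 0 (Set.Ioi 0)) (nhds 0) := tendsto_log_mul_rpow_nhdsGT_zero hδ
  have hT3 : Filter.Tendsto (fun ε : ℝ => Real.log ε * ε ^ (δ/2))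
      (nhdsWithin 0 (Set.Ioi 0)) (nhds 0) := tendsto_log_mul_rpow_nhdsGT_zero (half_pos hδ)
  have hcomb : Filter.Tendsto (fun ε : ℝ => b^2 * ε^δ - (2*b/Real.log 2) * (Real.log ε * ε^δ)
      + (1/Real.log 2)^2 * ((Real.log ε * ε^(δ/2)) * (Real.log ε * ε^(δ/2))))
      (nhdsWithin 0 (Set.Ioi 0)) (nhds 0) := by
    have h := ((hT1.const_mul (b^2)).sub (hT2.const_mul (2*b/Real.log 2))).add
      ((hT3.mul hT3).const_mul ((1/Real.log 2)^2))
    simpa using h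
  refine hcomb.congr' ?_
  filter_upwards [self_mem_nhdsWithin] with ε hε
  have hε0 : (0:ℝ) < ε := hε
  have hsq : ε^(δ/2) * ε^(δ/2) = ε^δ := by
    rw [← Real.rpow_add hε0]; norm_num
  have key : (Real.log ε * ε^(δ/2)) * (Real.log ε * ε^(δ/2)) = (Real.log ε)^2 * ε^δ := by
    rw [← hsq]; ring
  rw [key]
  simp only [Real.logb]
  have hlog2 : Real.log 2 ≠ 0 := ne_of_gt (Real.log_pos one_lt_two)
  field_simp
  ring


/-- every compact metric space `(X,d)` admits a compatible metric `d'`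
with `d' ≤ d` having the tame growth of covering numbers:
`ε^δ · log₂ #(X,d',ε) → 0` as `ε → 0⁺`, for every `δ > 0`. -/
theorem statement13 {X : Type*} [m : MetricSpace X] [CompactSpace X] :
    ∃ m' : MetricSpace X,
      m'.toUniformSpace.toTopologicalSpace = m.toUniformSpace.toTopologicalSpace ∧
      (∀ x y : X, m'.dist x y ≤ dist x y) ∧
      ∀ δ : ℝ, 0 < δ →
        Filter.Tendsto (fun ε : ℝ => ε ^ δ * Real.logb 2 (covNum m'.dist ε))
          (nhdsWithin 0 (Set.Ioi 0)) (nhds 0) := by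
  rcases isEmpty_or_nonempty X with hX | hX
  · refine ⟨m, rfl, fun x y => le_refl _, fun δ hδ => ?_⟩
    have hc : ∀ ε : ℝ, covNum (fun x y : X => dist x y) ε = 0 := by
      intro ε
      have h0 : (0:ℕ) ∈ {n : ℕ | ∃ U : Fin n → Set X, (⋃ i, U i) = Set.univ ∧
          ∀ i, ∀ x ∈ U i, ∀ y ∈ U i, dist x y < ε} := by
        refine ⟨fun i => ∅, ?_, fun i => i.elim0⟩
        rw [Set.iUnion_of_empty, eq_comm, Set.univ_eq_empty_iff]
        exact hX
      exact Nat.le_zero.1 (Nat.sInf_le h0)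
    have : (fun ε : ℝ => ε ^ δ * Real.logb 2 (covNum (fun x y : X => dist x y) ε))
        = fun _ => 0 := by
      funext ε
      rw [hc ε]
      simp
    rw [show (m.dist : X → X → ℝ) = fun x y : X => dist x y from rfl, this]
    exact tendsto_const_nhds
  · obtain ⟨u, hu⟩ := TopologicalSpace.exists_dense_seq X
    have hcont : ∀ x : X, Continuous (fun y => newDist u x y) := by
      intro x
      rw [Metric.continuous_iff]
      intro c ε hε
      refine ⟨ε, hε, fun a hac => ?_⟩
      rw [Real.dist_eq]
      exact lt_of_le_of_lt (newDist_abs_sub u x a c) hac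
    have H : ∀ s : Set X, IsOpen s ↔
        ∀ x ∈ s, ∃ ε > 0, ∀ y, newDist u x y < ε → y ∈ s := by
      intro s
      constructor
      · intro hs x hxs
        by_cases hns : sᶜ.Nonempty
        · obtain ⟨y0, hy0K, hy0min⟩ := (hs.isClosed_compl.isCompact).exists_isMinOn hns
            (hcont x).continuousOn
          refine ⟨newDist u x y0, ?_, fun y hy => ?_⟩
          · rcases (newDist_nonneg u x y0).lt_or_eq with h | h
            · exact h
            · exact absurd hxs (by rwa [newDist_eq_zero u hu h.symm])
          · by_contra hyns
            exact absurd (isMinOn_iff.1 hy0min y hyns) (not_le.2 hy)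
        · refine ⟨1, one_pos, fun y _ => ?_⟩
          have hs' : s = Set.univ := by
            rw [← Set.compl_empty_iff, ← Set.not_nonempty_iff_eq_empty]
            exact hns
          rw [hs']; trivial
      · intro h
        rw [Metric.isOpen_iff]
        intro x hxs
        obtain ⟨ε, hε, hb⟩ := h x hxs
        refine ⟨ε, hε, fun y hy => hb y ?_⟩
        calc newDist u x y ≤ dist x y := newDist_le_dist u x y
          _ = dist y x := dist_comm x y
          _ < ε := hy
    refine ⟨MetricSpace.ofDistTopology (newDist u) (newDist_self u) (newDist_comm u)
      (newDist_triangle u) H (fun x y h => newDist_eq_zero u hu h), rfl,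
      fun x y => le_refl _, ?_⟩
    intro δ hδ
    show Filter.Tendsto (fun ε : ℝ => ε ^ δ * Real.logb 2 (covNum (newDist u) ε))
      (nhdsWithin 0 (Set.Ioi 0)) (nhds 0)
    set D := Metric.diam (Set.univ : Set X) + 1 with hDdef
    have hD1 : 1 ≤ D := le_add_of_nonneg_left Metric.diam_nonneg
    set b := Real.logb 2 (4*D) + 1 with hbdef
    have hg := tendsto_rpow_mul_sq_log b hδ
    refine tendsto_of_tendsto_of_tendsto_of_le_of_le' tendsto_const_nhds hg ?_ ?_
    · filter_upwards [self_mem_nhdsWithin] with ε hε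
      have hε0 : (0:ℝ) < ε := hε
      have hlognn : (0:ℝ) ≤ Real.logb 2 (covNum (newDist u) ε) := by
        rcases Nat.eq_zero_or_pos (covNum (newDist u) ε) with h | h
        · rw [h]; simp
        · exact Real.logb_nonneg one_lt_two (by exact_mod_cast h)
      exact mul_nonneg (Real.rpow_nonneg hε0.le δ) hlognn
    · filter_upwards [Ioc_mem_nhdsGT (zero_lt_one)] with ε hε
      obtain ⟨hε0, hε1⟩ := hε
      set N := ⌈Real.logb 2 (4 * D / ε)⌉₊ with hNdef
      set M := ⌊2 * D / ε⌋₊ + 1 with hMdef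
      have hcov : covNum (newDist u) ε ≤ M ^ N := covNum_newDist_le u hε0
      have h4D : (1:ℝ) ≤ 4 * D / ε := by
        rw [le_div_iff₀ hε0]; nlinarith
      have hL0 : (0:ℝ) ≤ Real.logb 2 (4*D/ε) := Real.logb_nonneg one_lt_two h4D
      have hL : Real.logb 2 (4*D/ε) = Real.logb 2 (4*D) - Real.logb 2 ε :=
        Real.logb_div (by positivity) hε0.ne'
      have hNle : (N:ℝ) ≤ Real.logb 2 (4*D/ε) + 1 := le_of_lt (Nat.ceil_lt_add_one hL0)
      have hM1 : (1:ℝ) ≤ (M:ℝ) := by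
        rw [hMdef]; push_cast
        linarith [Nat.cast_nonneg (α := ℝ) ⌊2*D/ε⌋₊]
      have hMpos : (0:ℝ) < (M:ℝ) := lt_of_lt_of_le one_pos hM1
      have hMle : (M:ℝ) ≤ 4*D/ε := by
        have hfl := Nat.floor_le (show (0:ℝ) ≤ 2*D/ε by positivity)
        have h1 : (1:ℝ) ≤ 2*D/ε := by rw [le_div_iff₀ hε0]; nlinarith
        have heq2 : 2*(2*D/ε) = 4*D/ε := by ring
        rw [hMdef]; push_cast
        linarith
      have hlogM : Real.logb 2 (M:ℝ) ≤ Real.logb 2 (4*D/ε) :=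
        Real.logb_le_logb_of_le one_lt_two hMpos hMle
      have hlogM0 : (0:ℝ) ≤ Real.logb 2 (M:ℝ) := Real.logb_nonneg one_lt_two hM1
      have hcovlog : Real.logb 2 (covNum (newDist u) ε) ≤ (N:ℝ) * Real.logb 2 (M:ℝ) := by
        rcases Nat.eq_zero_or_pos (covNum (newDist u) ε) with h | h
        · rw [h]
          simp only [Nat.cast_zero, Real.logb_zero]
          positivity
        · calc Real.logb 2 (covNum (newDist u) ε)
              ≤ Real.logb 2 ((M:ℝ) ^ N) := by
                apply Real.logb_le_logb_of_le one_lt_two (by exact_mod_cast h)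
                exact_mod_cast hcov
            _ = (N:ℝ) * Real.logb 2 (M:ℝ) := Real.logb_pow 2 (M:ℝ) N
      have h1 : (N:ℝ) ≤ b - Real.logb 2 ε := by
        rw [hbdef]; rw [hL] at hNle; linarith
      have h2 : Real.logb 2 (M:ℝ) ≤ b - Real.logb 2 ε := by
        rw [hbdef]; rw [hL] at hlogM; linarith
      have hfinal : Real.logb 2 (covNum (newDist u) ε) ≤ (b - Real.logb 2 ε)^2 := by
        nlinarith [Nat.cast_nonneg (α := ℝ) N]
      exact mul_le_mul_of_nonneg_left hfinal (Real.rpow_nonneg hε0.le δ)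
end
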